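/- If G is a finite group whose power graph has matching number 2, then G is isomorphic to C₄, C₅, D₃ (= S₃), or D₄ (dihedral of order 8). -/

import Mathlib

open SimpleGraph

def powerGraph (G : Type*) [Group G] : SimpleGraph G where
  Adj x y := x ≠ y ∧ ((∃ n : ℕ, y ^ n = x) ∨ (∃ n : ℕ, x ^ n = y))
  symm := ⟨fun x y ⟨h, hp⟩ => ⟨h.symm, hp.symm⟩⟩
  loopless := ⟨fun x ⟨h, _⟩ => h rfl⟩

noncomputable def matchingNumber {V : Type*} (Γ : SimpleGraph V) : ℕ :=
  sSup {n | ∃ M : Γ.Subgraph, M.IsMatching ∧ M.edgeSet.ncard = n}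

def hasPerfectMatching {V : Type*} (Γ : SimpleGraph V) : Prop :=
  ∃ M : Γ.Subgraph, M.IsPerfectMatching

/-!
The power graph contains the edge {1, t} for every t ≠ 1 and the edge {x, x⁻¹} for every x of
order greater than 2, and matching number 2 forbids three pairwise disjoint edges. In a group of
exponent 2 every edge contains 1, so there are not even two disjoint edges; hence some x has order
greater than 2. If G also has an involution, then x and x⁻¹ are the only elements of order greater
than 2. This forces x to have order 3 or 4, and every element outside ⟨x⟩ to be an involution
inverting x, so ⟨x⟩ has index at most 2 and G is C₄, D₃ or D₄. Without involutions |G| is odd,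
the pairs {x, x⁻¹} with x ≠ 1 are disjoint edges, so |G| ≤ 5, while two disjoint edges give
|G| ≥ 4; hence |G| = 5.
-/

namespace SimpleGraph

variable {V : Type*} {Γ : SimpleGraph V} {M : Γ.Subgraph} {a b c d p q v : V}

lemma Subgraph.IsMatching.eq_of_mem_edgeSet (hM : M.IsMatching) {e₁ e₂ : Sym2 V}
    (he₁ : e₁ ∈ M.edgeSet) (he₂ : e₂ ∈ M.edgeSet) (hv₁ : v ∈ e₁) (hv₂ : v ∈ e₂) : e₁ = e₂ := by
  have h₁ := Sym2.other_spec hv₁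
  have h₂ := Sym2.other_spec hv₂
  rw [← h₁, Subgraph.mem_edgeSet] at he₁
  rw [← h₂, Subgraph.mem_edgeSet] at he₂
  rw [← h₁, ← h₂, hM.eq_of_adj_left he₁ he₂]

lemma Subgraph.IsMatching.sup_subgraphOfAdj (hM : M.IsMatching) (hab : Γ.Adj a b)
    (hd : Disjoint M.verts {a, b}) : (M ⊔ Γ.subgraphOfAdj hab).IsMatching :=
  hM.sup (.subgraphOfAdj hab) (by rwa [hM.support_eq_verts, support_subgraphOfAdj])

lemma Subgraph.ncard_edgeSet_sup_subgraphOfAdj [Finite V] (hab : Γ.Adj a b) (ha : a ∉ M.verts) :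
    (M ⊔ Γ.subgraphOfAdj hab).edgeSet.ncard = M.edgeSet.ncard + 1 := by
  rw [Subgraph.edgeSet_sup, edgeSet_subgraphOfAdj, Set.union_singleton,
    Set.ncard_insert_of_notMem fun h : s(a, b) ∈ M.edgeSet => ha (M.edge_vert h)]

lemma bddAbove_matchingSizes [Finite V] :
    BddAbove {n | ∃ M : Γ.Subgraph, M.IsMatching ∧ M.edgeSet.ncard = n} :=
  ⟨Nat.card (Sym2 V), by rintro _ ⟨M, -, rfl⟩; exact Set.ncard_le_card _⟩

lemma ncard_edgeSet_le_matchingNumber [Finite V] (hM : M.IsMatching) :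
    M.edgeSet.ncard ≤ matchingNumber Γ :=
  le_csSup bddAbove_matchingSizes ⟨M, hM, rfl⟩

lemma exists_isMatching_ncard_eq_matchingNumber [Finite V] :
    ∃ M : Γ.Subgraph, M.IsMatching ∧ M.edgeSet.ncard = matchingNumber Γ :=
  have : {n | ∃ M : Γ.Subgraph, M.IsMatching ∧ M.edgeSet.ncard = n}.Nonempty :=
    ⟨0, ⊥, fun _ hv => absurd hv (Set.notMem_empty _), by simp⟩
  Nat.sSup_mem this bddAbove_matchingSizes

lemma exists_disjoint_adj_of_two_le_matchingNumber [Finite V] (h : 2 ≤ matchingNumber Γ) :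
    ∃ a b c d, Γ.Adj a b ∧ Γ.Adj c d ∧ Disjoint ({a, b} : Set V) {c, d} := by
  obtain ⟨M, hM, hcard⟩ := exists_isMatching_ncard_eq_matchingNumber (Γ := Γ)
  obtain ⟨e₁, e₂, he₁, he₂, hne⟩ := (Set.one_lt_ncard_iff).1 (hcard ▸ h : 1 < M.edgeSet.ncard)
  induction e₁ using Sym2.ind with | _ a b =>
  induction e₂ using Sym2.ind with | _ c d =>
  refine ⟨a, b, c, d, M.adj_sub he₁, M.adj_sub he₂, Set.disjoint_left.2 fun v hv₁ hv₂ => ?_⟩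
  exact hne (hM.eq_of_mem_edgeSet he₁ he₂ (Sym2.mem_iff.2 hv₁) (Sym2.mem_iff.2 hv₂))

lemma four_le_card_of_two_le_matchingNumber [Finite V] (h : 2 ≤ matchingNumber Γ) :
    4 ≤ Nat.card V := by
  obtain ⟨a, b, c, d, hab, hcd, hd⟩ := exists_disjoint_adj_of_two_le_matchingNumber h
  calc 4 = ({a, b} ∪ {c, d} : Set V).ncard := by
        rw [Set.ncard_union_eq hd, Set.ncard_pair hab.ne, Set.ncard_pair hcd.ne]
    _ ≤ Nat.card V := Set.ncard_le_card _

lemma three_le_matchingNumber [Finite V] (hab : Γ.Adj a b) (hcd : Γ.Adj c d) (hpq : Γ.Adj p q)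
    (h₁₂ : Disjoint ({a, b} : Set V) {c, d}) (h₁₃ : Disjoint ({a, b} : Set V) {p, q})
    (h₂₃ : Disjoint ({c, d} : Set V) {p, q}) : 3 ≤ matchingNumber Γ := by
  let M₂ := Γ.subgraphOfAdj hab ⊔ Γ.subgraphOfAdj hcd
  have h₁₂₃ : Disjoint M₂.verts {p, q} := Set.disjoint_union_left.2 ⟨h₁₃, h₂₃⟩
  have hM₃ : (M₂ ⊔ Γ.subgraphOfAdj hpq).IsMatching :=
    ((Subgraph.IsMatching.subgraphOfAdj hab).sup_subgraphOfAdj hcd h₁₂).sup_subgraphOfAdj hpq h₁₂₃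
  calc 3 = (M₂ ⊔ Γ.subgraphOfAdj hpq).edgeSet.ncard := by
        rw [Subgraph.ncard_edgeSet_sup_subgraphOfAdj _ (h₁₂₃.notMem_of_mem_right (by simp)),
          Subgraph.ncard_edgeSet_sup_subgraphOfAdj _ (h₁₂.notMem_of_mem_right (by simp)),
          edgeSet_subgraphOfAdj, Set.ncard_singleton]
    _ ≤ matchingNumber Γ := ncard_edgeSet_le_matchingNumber hM₃

end SimpleGraph

open Subgroup

section Dihedral

variable {G : Type*} [Group G]

lemma conj_eq_inv_of_mem_zpowers {x t y : G} (htx : t * x * t⁻¹ = x⁻¹) (hy : y ∈ zpowers x) :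
    t * y * t⁻¹ = y⁻¹ := by
  obtain ⟨k, rfl⟩ := hy
  simpa [htx] using map_zpow (MulAut.conj t) x k

lemma Subgroup.inv_mul_mem_of_conj_eq_inv (H : Subgroup G) {x u g : G} (hx : x⁻¹ ≠ x)
    (hconj : ∀ v ∉ H, v * x * v⁻¹ = x⁻¹) (hu : u ∉ H) (hg : g ∉ H) : u⁻¹ * g ∈ H := by
  by_contra hw
  apply hx
  calc x⁻¹ = g * x * g⁻¹ := (hconj g hg).symm
    _ = u * ((u⁻¹ * g) * x * (u⁻¹ * g)⁻¹) * u⁻¹ := by group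
    _ = (u * x * u⁻¹)⁻¹ := by rw [hconj _ hw]; group
    _ = x := by rw [hconj u hu, inv_inv]

theorem nonempty_mulEquiv_dihedralGroup {x t : G} (ht : t * t = 1) (htx : t * x * t⁻¹ = x⁻¹)
    (ht_notMem : t ∉ zpowers x) (hcover : ∀ g ∉ zpowers x, t⁻¹ * g ∈ zpowers x) :
    Nonempty (G ≃* DihedralGroup (orderOf x)) := by
  rw [← Nat.card_zpowers]
  set n := Nat.card (zpowers x)
  let e := zmodCyclicMulEquiv (inferInstance : IsCyclic (zpowers x))
  let ρ : ZMod n → G := fun i => e (Multiplicative.ofAdd i)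
  have ρ_add (i j : ZMod n) : ρ (i + j) = ρ i * ρ j := by simp [ρ, ofAdd_add]
  have ρ_mem (i : ZMod n) : ρ i ∈ zpowers x := (e _).2
  have ρ_injective : Function.Injective ρ := fun i j h =>
    Multiplicative.ofAdd.injective (e.injective (Subtype.ext h))
  have ρ_surjective {g : G} (hg : g ∈ zpowers x) : ∃ i, ρ i = g :=
    ⟨Multiplicative.toAdd (e.symm ⟨g, hg⟩), by simp [ρ]⟩
  have t_mul_ρ (i : ZMod n) : t * ρ i = ρ (-i) * t := by
    have : ρ (-i) = (ρ i)⁻¹ := by simp [ρ, ofAdd_neg]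
    rw [this, ← conj_eq_inv_of_mem_zpowers htx (ρ_mem i), inv_mul_cancel_right]
  let φ : DihedralGroup n →* G :=
    { toFun := fun
        | .r i => ρ i
        | .sr i => t * ρ i
      map_one' := show ρ 0 = 1 by simp [ρ]
      map_mul' := by
        rintro (i | i) (j | j)
        · exact ρ_add i j
        · show t * ρ (j - i) = ρ i * (t * ρ j)
          rw [sub_eq_neg_add, ρ_add, ← mul_assoc, t_mul_ρ, neg_neg]; group
        · show t * ρ (i + j) = t * ρ i * ρ j
          rw [ρ_add, mul_assoc]
        · show ρ (j - i) = t * ρ i * (t * ρ j)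
          rw [t_mul_ρ, sub_eq_neg_add, ρ_add, mul_assoc, ← mul_assoc t, ht, one_mul] }
  refine ⟨(MulEquiv.ofBijective φ ⟨?_, ?_⟩).symm⟩
  · rintro (i | i) (j | j) h
    · exact congrArg _ (ρ_injective h)
    · exact (ht_notMem (eq_mul_inv_of_mul_eq h.symm ▸ mul_mem (ρ_mem i) (inv_mem (ρ_mem j)))).elim
    · exact (ht_notMem (eq_mul_inv_of_mul_eq h ▸ mul_mem (ρ_mem j) (inv_mem (ρ_mem i)))).elim
    · exact congrArg _ (ρ_injective (mul_left_cancel h))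
  · intro g
    by_cases hg : g ∈ zpowers x
    · obtain ⟨i, hi⟩ := ρ_surjective hg
      exact ⟨.r i, hi⟩
    · obtain ⟨i, hi⟩ := ρ_surjective (hcover g hg)
      exact ⟨.sr i, show t * ρ i = g by rw [hi, mul_inv_cancel_left]⟩

end Dihedral

section PowerGraph

variable {G : Type*} [Group G]

lemma powerGraph_adj_one {t : G} (ht : t ≠ 1) : (powerGraph G).Adj 1 t :=
  ⟨ht.symm, .inl ⟨0, pow_zero t⟩⟩

lemma powerGraph_adj_inv [Finite G] {x : G} (hx : x⁻¹ ≠ x) : (powerGraph G).Adj x x⁻¹ :=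
  ⟨hx.symm, .inr ⟨orderOf x - 1, by
    rw [eq_inv_iff_mul_eq_one, ← pow_succ, Nat.sub_add_cancel (orderOf_pos x), pow_orderOf_eq_one]⟩⟩

lemma eq_one_or_eq_one_of_powerGraph_adj (hexp : ∀ z : G, z⁻¹ = z) {u v : G}
    (huv : (powerGraph G).Adj u v) : u = 1 ∨ v = 1 := by
  have hpow (z : G) (n : ℕ) : z ^ n = 1 ∨ z ^ n = z := by
    have hz : z ^ 2 = 1 := by rw [sq, ← inv_eq_iff_mul_eq_one.1 (hexp z)]
    rcases Nat.even_or_odd' n with ⟨k, rfl | rfl⟩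
    · left; rw [pow_mul, hz, one_pow]
    · right; rw [pow_succ, pow_mul, hz, one_pow, one_mul]
  obtain ⟨hne, ⟨n, rfl⟩ | ⟨n, rfl⟩⟩ := huv
  · rcases hpow v n with h | h
    · exact .inl h
    · exact (hne h).elim
  · rcases hpow u n with h | h
    · exact .inr h
    · exact (hne h.symm).elim

lemma disjoint_pair_inv {x y : G} (hyx : y ≠ x) (hyx' : y ≠ x⁻¹) :
    Disjoint ({x, x⁻¹} : Set G) {y, y⁻¹} := by
  refine Set.disjoint_left.2 ?_
  rintro v (rfl | rfl) (h | h)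
  · exact hyx h.symm
  · exact hyx' (by rw [h, inv_inv])
  · exact hyx' h.symm
  · exact hyx (inv_injective h).symm

lemma disjoint_one_pair_inv {t x : G} (ht : t⁻¹ = t) (hx : x⁻¹ ≠ x) :
    Disjoint ({1, t} : Set G) {x, x⁻¹} := by
  refine Set.disjoint_left.2 ?_
  rintro v (rfl | rfl) (h | h)
  · exact hx (by rw [← h, inv_one])
  · exact hx (by rw [inv_eq_one.1 (h : 1 = x⁻¹).symm, inv_one])
  · exact hx (by rw [← h, ht])
  · have hxv : x = v := by rw [← inv_inv x, ← (h : v = x⁻¹), ht]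
    exact hx (by rw [hxv, ht])

lemma exists_inv_ne_self_of_two_le_matchingNumber [Finite G]
    (h : 2 ≤ matchingNumber (powerGraph G)) : ∃ x : G, x⁻¹ ≠ x := by
  by_contra! hexp
  obtain ⟨a, b, c, d, hab, hcd, hd⟩ := exists_disjoint_adj_of_two_le_matchingNumber h
  have hab₁ : (1 : G) ∈ ({a, b} : Set G) :=
    (eq_one_or_eq_one_of_powerGraph_adj hexp hab).imp Eq.symm Eq.symm
  have hcd₁ : (1 : G) ∈ ({c, d} : Set G) :=
    (eq_one_or_eq_one_of_powerGraph_adj hexp hcd).imp Eq.symm Eq.symm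
  exact Set.disjoint_left.1 hd hab₁ hcd₁

lemma eq_or_eq_inv_of_involution [Finite G] (hG : matchingNumber (powerGraph G) ≤ 2)
    {t x y : G} (ht₁ : t ≠ 1) (ht : t⁻¹ = t) (hx : x⁻¹ ≠ x) (hy : y⁻¹ ≠ y) : y = x ∨ y = x⁻¹ := by
  by_contra! hyx
  have := three_le_matchingNumber (powerGraph_adj_one ht₁) (powerGraph_adj_inv hx)
    (powerGraph_adj_inv hy) (disjoint_one_pair_inv ht hx) (disjoint_one_pair_inv ht hy)
    (disjoint_pair_inv hyx.1 hyx.2)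
  omega

lemma orderOf_eq_three_or_four {x : G} (hx : x⁻¹ ≠ x)
    (hP : ∀ y : G, y⁻¹ ≠ y → y = x ∨ y = x⁻¹) : orderOf x = 3 ∨ orderOf x = 4 := by
  have hx₁ : x ≠ 1 := by rintro rfl; exact hx inv_one
  have hx₂ : ¬x ^ 2 ^ 1 = 1 := by rwa [pow_one, sq, ← inv_eq_iff_mul_eq_one]
  by_cases hsq : (x ^ 2)⁻¹ = x ^ 2
  · right
    refine orderOf_eq_prime_pow hx₂ ?_
    rw [pow_succ, pow_one, pow_mul, sq (x ^ 2), ← inv_eq_iff_mul_eq_one, hsq]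
  · left
    rcases hP _ hsq with h | h
    · exact (hx₁ (by rwa [sq, mul_eq_left] at h)).elim
    · exact orderOf_eq_prime (by rw [pow_succ, h, inv_mul_cancel]) hx₁

lemma inv_eq_self_of_notMem_zpowers {x v : G} (hP : ∀ y : G, y⁻¹ ≠ y → y = x ∨ y = x⁻¹)
    (hv : v ∉ zpowers x) : v⁻¹ = v := by
  by_contra h
  rcases hP v h with rfl | rfl
  · exact hv (mem_zpowers _)
  · exact hv (inv_mem (mem_zpowers _))

lemma conj_eq_inv_of_notMem_zpowers {x v : G} (hP : ∀ y : G, y⁻¹ ≠ y → y = x ∨ y = x⁻¹)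
    (hv : v ∉ zpowers x) : v * x * v⁻¹ = x⁻¹ := by
  have hvx : v * x ∉ zpowers x := fun h =>
    hv (by simpa using mul_mem h (inv_mem (mem_zpowers x)))
  calc v * x * v⁻¹ = (v * x)⁻¹ * v := by
        rw [inv_eq_self_of_notMem_zpowers hP hvx, inv_eq_self_of_notMem_zpowers hP hv]
    _ = x⁻¹ := by group

theorem nonempty_mulEquiv_of_involution [Finite G] (hG : matchingNumber (powerGraph G) ≤ 2)
    {t x : G} (ht₁ : t ≠ 1) (ht : t⁻¹ = t) (hx : x⁻¹ ≠ x) :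
    Nonempty (G ≃* Multiplicative (ZMod 4)) ∨ Nonempty (G ≃* DihedralGroup 3) ∨
      Nonempty (G ≃* DihedralGroup 4) := by
  have hP (y : G) (hy : y⁻¹ ≠ y) : y = x ∨ y = x⁻¹ := eq_or_eq_inv_of_involution hG ht₁ ht hx hy
  have hord := orderOf_eq_three_or_four hx hP
  by_cases hcyc : ∀ g : G, g ∈ zpowers x
  · have : IsCyclic G := ⟨x, hcyc⟩
    have hcard := orderOf_eq_card_of_forall_mem_zpowers hcyc
    have htwo : 2 ∣ Nat.card G :=
      orderOf_eq_prime (inv_eq_iff_mul_eq_one.1 ht ▸ sq t) ht₁ ▸ orderOf_dvd_natCard t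
    refine .inl ⟨mulEquivOfCyclicCardEq ?_⟩
    rcases hord with h | h <;> rw [← hcard, h] at htwo ⊢
    · omega
    · simp
  · push Not at hcyc
    obtain ⟨u, hu⟩ := hcyc
    have hdih := nonempty_mulEquiv_dihedralGroup
      (inv_eq_iff_mul_eq_one.1 (inv_eq_self_of_notMem_zpowers hP hu))
      (conj_eq_inv_of_notMem_zpowers hP hu) hu
      fun g hg => (zpowers x).inv_mul_mem_of_conj_eq_inv hx
        (fun v hv => conj_eq_inv_of_notMem_zpowers hP hv) hu hg
    rcases hord with h | h <;> rw [h] at hdih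
    · exact .inr (.inl hdih)
    · exact .inr (.inr hdih)

theorem nonempty_mulEquiv_zmod_five_of_no_involution [Finite G]
    (hG : matchingNumber (powerGraph G) = 2) (hfree : ∀ z : G, z⁻¹ = z → z = 1) :
    Nonempty (G ≃* Multiplicative (ZMod 5)) := by
  classical
  have := Fintype.ofFinite G
  have hcard₄ := four_le_card_of_two_le_matchingNumber hG.ge
  have hodd : ¬2 ∣ Nat.card G := fun h => by
    obtain ⟨z, hz⟩ := exists_prime_orderOf_dvd_card' 2 h
    have hz₁ : z ≠ 1 := by rintro rfl; simp at hz
    exact hz₁ (hfree z (inv_eq_of_mul_eq_one_right (by rw [← sq, ← hz, pow_orderOf_eq_one])))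
  have hpair (x y z : G) (hx : x ≠ 1) (hy : y ∉ ({1, x, x⁻¹} : Finset G))
      (hz : z ∉ ({1, x, x⁻¹, y, y⁻¹} : Finset G)) : False := by
    simp only [Finset.mem_insert, Finset.mem_singleton, not_or] at hy hz
    have := three_le_matchingNumber (powerGraph_adj_inv fun h => hx (hfree x h))
      (powerGraph_adj_inv fun h => hy.1 (hfree y h)) (powerGraph_adj_inv fun h => hz.1 (hfree z h))
      (disjoint_pair_inv hy.2.1 hy.2.2) (disjoint_pair_inv hz.2.1 hz.2.2.1)
      (disjoint_pair_inv hz.2.2.2.1 hz.2.2.2.2)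
    omega
  have hcard₅ : Nat.card G ≤ 5 := by
    have : Nontrivial G := Finite.one_lt_card_iff_nontrivial.1 (by omega)
    obtain ⟨x, hx⟩ := exists_ne (1 : G)
    obtain ⟨y, -, hy⟩ := Finset.exists_mem_notMem_of_card_lt_card
      (s := {1, x, x⁻¹}) (t := Finset.univ)
      (Finset.card_le_three.trans_lt (by rw [Finset.card_univ, ← Nat.card_eq_fintype_card]; omega))
    rw [Nat.card_eq_fintype_card, ← Finset.card_univ,
      ← Finset.eq_univ_of_forall fun z => not_not.1 (hpair x y z hx hy)]
    exact Finset.card_le_five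
  have : Fact (Nat.Prime 5) := ⟨by norm_num⟩
  exact ⟨mulEquivOfPrimeCardEq (p := 5) (by omega) (by simp)⟩

end PowerGraph

theorem stmt12 (G : Type*) [Group G] [Fintype G]
    (h : matchingNumber (powerGraph G) = 2) :
    Nonempty (G ≃* Multiplicative (ZMod 4)) ∨ Nonempty (G ≃* Multiplicative (ZMod 5)) ∨
    Nonempty (G ≃* DihedralGroup 3) ∨ Nonempty (G ≃* DihedralGroup 4) := by
  by_cases hinv : ∃ t : G, t ≠ 1 ∧ t⁻¹ = t
  · obtain ⟨t, ht₁, ht⟩ := hinv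
    obtain ⟨x, hx⟩ := exists_inv_ne_self_of_two_le_matchingNumber h.ge
    rcases nonempty_mulEquiv_of_involution h.le ht₁ ht hx with h₄ | h₃ | h₄'
    · exact .inl h₄
    · exact .inr (.inr (.inl h₃))
    · exact .inr (.inr (.inr h₄'))
  · push Not at hinv
    exact .inr (.inl (nonempty_mulEquiv_zmod_five_of_no_involution h
      fun z hz => not_not.1 fun hz₁ => hinv z hz₁ hz))
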